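/- arXiv:1505.04574 — 2 statements merged into one kernel-verified Lean document; each statement's English description precedes it below -/
import Mathlib

section
/- Let 𝒯 be a pretriangulated category which is ℚ-linear (Hom-sets are ℚ-vector spaces and composition is ℚ-bilinear) and pseudo-abelian. Let A → B → C → A[1] be a distinguished triangle and let φ = (φ_A, φ_B, φ_C) be an endomorphism of this triangle (i.e., endomorphisms of A, B, C commuting with the three maps of the triangle, with φ_A[1] appearing in the last square). If A admits a finite decomposition into generalized φ_A-eigenspaces and C admits a finite decomposition into generalized φ_C-eigenspaces, then B admits a finite decomposition into generalized φ_B-eigenspaces; concretely, if P(φ_A) = 0 and Q(φ_C) = 0 for polynomials P, Q that are products of powers of distinct rational linear factors, then (P·Q)(φ_B) = 0 in End(B). -/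
open CategoryTheory CategoryTheory.Limits CategoryTheory.Pretriangulated

lemma aeval_comm_aux {𝒯 : Type*} [Category 𝒯] [Preadditive 𝒯] [Linear ℚ 𝒯]
    {X Y : 𝒯} (f : X ⟶ Y) (a : End X) (b : End Y)
    (h : (a : X ⟶ X) ≫ f = f ≫ (b : Y ⟶ Y)) (R : Polynomial ℚ) :
    (Polynomial.aeval (A := End X) a R : X ⟶ X) ≫ f
      = f ≫ (Polynomial.aeval (A := End Y) b R : Y ⟶ Y) := by
  have hpow : ∀ n : ℕ, ((a ^ n : End X) : X ⟶ X) ≫ f = f ≫ ((b ^ n : End Y) : Y ⟶ Y) := by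
    intro n
    induction n with
    | zero => simp [End.one_def]
    | succ n ih =>
      rw [pow_succ, pow_succ, End.mul_def, End.mul_def]
      change ((a : X ⟶ X) ≫ _) ≫ f = f ≫ ((b : Y ⟶ Y) ≫ _)
      rw [Category.assoc, ih, ← Category.assoc, h, Category.assoc]
  induction R using Polynomial.induction_on' with
  | add p q hp hq =>
    rw [map_add]
    change (_ + _ : X ⟶ X) ≫ f = _
    rw [Preadditive.add_comp, hp, hq, map_add]
    change _ = f ≫ (_ + _ : Y ⟶ Y)
    rw [Preadditive.comp_add]
  | monomial n q =>
    rw [Polynomial.aeval_monomial, Polynomial.aeval_monomial]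
    change ((algebraMap ℚ (End X) q * a ^ n : End X) : X ⟶ X) ≫ f = _
    rw [End.mul_def, End.mul_def]
    change ((a ^ n : End X) ≫ _) ≫ f = f ≫ ((b ^ n : End Y) ≫ _)
    have ha : (algebraMap ℚ (End X) q : X ⟶ X) = q • 𝟙 X := by
      simp [Algebra.algebraMap_eq_smul_one, End.one_def]
    have hb : (algebraMap ℚ (End Y) q : Y ⟶ Y) = q • 𝟙 Y := by
      simp [Algebra.algebraMap_eq_smul_one, End.one_def]
    rw [ha, hb]
    simp only [Linear.comp_smul, Linear.smul_comp, Category.comp_id, Category.id_comp]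
    rw [hpow n]

/-- Let `𝒯` be a `ℚ`-linear pseudo-abelian pretriangulated category,
`A ⟶ B ⟶ C ⟶ A⟦1⟧` a distinguished triangle with an endomorphism
`φ = (φ.hom₁, φ.hom₂, φ.hom₃)`. If `P` and `Q` are products of powers of distinct rational
linear factors with `P(φ_A) = 0` and `Q(φ_C) = 0`, then `(P * Q)(φ_B) = 0` in `End B`;
in particular `B` admits a finite decomposition into generalized eigenspaces. -/
theorem stmt3 {𝒯 : Type*} [Category 𝒯] [Preadditive 𝒯] [Linear ℚ 𝒯]
    [Limits.HasZeroObject 𝒯] [HasShift 𝒯 ℤ]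
    [∀ n : ℤ, (shiftFunctor 𝒯 n).Additive] [Pretriangulated 𝒯]
    [IsIdempotentComplete 𝒯]
    (T : Triangle 𝒯) (hT : T ∈ distTriang 𝒯) (φ : T ⟶ T)
    {n k : ℕ} (α : Fin n → ℚ) (β : Fin k → ℚ)
    (hα : Function.Injective α) (hβ : Function.Injective β)
    (m : Fin n → ℕ) (l : Fin k → ℕ) (hm : ∀ i, 0 < m i) (hl : ∀ j, 0 < l j)
    (P Q : Polynomial ℚ)
    (hP : P = ∏ i, (Polynomial.X - Polynomial.C (α i)) ^ m i)
    (hQ : Q = ∏ j, (Polynomial.X - Polynomial.C (β j)) ^ l j)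
    (hPA : Polynomial.aeval (A := End T.obj₁) φ.hom₁ P = 0)
    (hQC : Polynomial.aeval (A := End T.obj₃) φ.hom₃ Q = 0) :
    Polynomial.aeval (A := End T.obj₂) φ.hom₂ (P * Q) = 0 := by
  have h2 : (Polynomial.aeval (A := End T.obj₂) φ.hom₂ Q : T.obj₂ ⟶ T.obj₂) ≫ T.mor₂ = 0 := by
    rw [aeval_comm_aux T.mor₂ φ.hom₂ φ.hom₃ φ.comm₂.symm, hQC]
    change T.mor₂ ≫ (0 : T.obj₃ ⟶ T.obj₃) = 0
    simp
  obtain ⟨v, hv⟩ := Triangle.coyoneda_exact₂ T hT _ h2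
  rw [map_mul, End.mul_def]
  show (Polynomial.aeval (A := End T.obj₂) φ.hom₂ Q : T.obj₂ ⟶ T.obj₂) ≫
    (Polynomial.aeval (A := End T.obj₂) φ.hom₂ P : T.obj₂ ⟶ T.obj₂) = 0
  rw [hv, Category.assoc, ← aeval_comm_aux T.mor₁ φ.hom₁ φ.hom₂ φ.comm₁.symm, hPA]
  change v ≫ (0 : T.obj₁ ⟶ T.obj₁) ≫ T.mor₁ = 0
  simp
end

section
/- Let 𝒯 be a pretriangulated category which is ℚ-linear and pseudo-abelian. Let A → B → C → A[1] be a distinguished triangle with an endomorphism φ = (φ_A, φ_B, φ_C) of the triangle, and assume A and C admit finite decompositions into generalized eigenspaces for φ_A and φ_C respectively (with rational eigenvalues). Then for every rational number α the induced triangle of generalized eigenspaces for the eigenvalue α, A^{(α)} → B^{(α)} → C^{(α)} → A^{(α)}[1], is distinguished; i.e., there are φ-equivariant direct sum decompositions of A, B, C indexed by the finitely many occurring eigenvalues, compatible with the three maps of the triangle, such that on the summand for eigenvalue α some power of (φ − α·id) vanishes, and each resulting triangle of summands is distinguished. -/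
/-!
If `P(φ₁) = 0` then `P(φ₂)` kills the image of `mor₁`, so it factors through `mor₂`; if moreover
`Q(φ₃) = 0` then `Q(φ₂) ≫ mor₂ = mor₂ ≫ Q(φ₃) = 0`, hence `(P Q)(φ₂) = 0`. So `φ`, as an
endomorphism of the triangle, is killed by `∏_{b ∈ s} (X - b)^N` for a finite set `s` of rational
numbers. By the Chinese remainder theorem the indicator functions of the points of `s` lift to
polynomials `e_a` modulo the `(X - b)^N`, and the `e_a(φ)` are orthogonal idempotents of `T`
summing to `1`, commuting with `φ`, with `(φ - a)^N` vanishing on the image of `e_a(φ)`.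
Triangles in an idempotent complete category form an idempotent complete category, so these
idempotents split, and a retract of a distinguished triangle is distinguished.
-/

open CategoryTheory Category Limits Pretriangulated
open Polynomial hiding zero_comp comp_zero

namespace Polynomial

section CommRing

variable {R : Type*} [CommRing R] [DecidableEq R]

theorem prod_X_sub_C_pow_dvd_prod {ι : Type*} [Fintype ι] {α : ι → R} (hα : Function.Injective α)
    (m : ι → ℕ) {s : Finset R} (hs : ∀ i, α i ∈ s) {N : ℕ} (hm : ∀ i, m i ≤ N) :
    ∏ i, (X - C (α i)) ^ m i ∣ ∏ b ∈ s, (X - C b) ^ N :=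
  calc ∏ i, (X - C (α i)) ^ m i ∣ ∏ i, (X - C (α i)) ^ N :=
        Finset.prod_dvd_prod_of_dvd _ _ fun i _ ↦ pow_dvd_pow _ (hm i)
    _ = ∏ b ∈ Finset.univ.image α, (X - C b) ^ N :=
        (Finset.prod_image (f := fun b ↦ (X - C b) ^ N) fun i _ j _ h ↦ hα h).symm
    _ ∣ ∏ b ∈ s, (X - C b) ^ N :=
        Finset.prod_dvd_prod_of_subset _ _ _ (by simpa [Finset.subset_iff] using hs)

theorem exists_mul_dvd_prod_X_sub_C_pow {ι κ : Type*} [Fintype ι] [Fintype κ] {α : ι → R}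
    {β : κ → R} (hα : Function.Injective α) (hβ : Function.Injective β) (m : ι → ℕ)
    (l : κ → ℕ) :
    ∃ (s : Finset R) (N : ℕ), 0 < N ∧
      (∏ i, (X - C (α i)) ^ m i) * ∏ j, (X - C (β j)) ^ l j ∣ ∏ b ∈ s, (X - C b) ^ N := by
  let s := Finset.univ.image α ∪ Finset.univ.image β
  have hαs (i) : α i ∈ s := Finset.mem_union_left _ (Finset.mem_image_of_mem α (Finset.mem_univ i))
  have hβs (j) : β j ∈ s := Finset.mem_union_right _ (Finset.mem_image_of_mem β (Finset.mem_univ j))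
  refine ⟨s, Finset.univ.sup m + (Finset.univ.sup l + 1), by omega, (mul_dvd_mul
    (prod_X_sub_C_pow_dvd_prod hα m hαs fun i ↦ Finset.le_sup (Finset.mem_univ i))
    (prod_X_sub_C_pow_dvd_prod hβ l hβs fun j ↦
      (Finset.le_sup (Finset.mem_univ j)).trans (Nat.le_succ _))).trans ?_⟩
  rw [← Finset.prod_mul_distrib]
  exact Finset.prod_dvd_prod_of_dvd _ _ fun b _ ↦ (pow_add _ _ _).symm.dvd

end CommRing

variable {K : Type*} [Field K]

open Function in
theorem exists_forall_mk_X_sub_C_pow_eq_ite [DecidableEq K] (s : Finset K) (n : ℕ) (a : K) :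
    ∃ e : K[X], ∀ b ∈ s,
      Ideal.Quotient.mk (Ideal.span {(X - C b) ^ n}) e = if a = b then 1 else 0 := by
  have hcop : Pairwise (IsCoprime on fun b : s ↦ Ideal.span {(X - C b.1) ^ n}) :=
    fun b c hbc ↦ (Ideal.isCoprime_span_singleton_iff _ _).2
      (pairwise_coprime_X_sub_C Subtype.val_injective hbc).pow
  obtain ⟨e, he⟩ := Ideal.pi_quotient_surjective hcop fun b ↦ if a = b.1 then 1 else 0
  exact ⟨e, fun b hb ↦ he ⟨b, hb⟩⟩

variable {A : Type*} [Ring A] [Algebra K A] {x : A} {s : Finset K} {n : ℕ}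

theorem aeval_eq_of_forall_mk_X_sub_C_pow_eq (hx : aeval x (∏ b ∈ s, (X - C b) ^ n) = 0)
    {f g : K[X]}
    (h : ∀ b ∈ s, Ideal.Quotient.mk (Ideal.span {(X - C b) ^ n}) f =
      Ideal.Quotient.mk (Ideal.span {(X - C b) ^ n}) g) :
    aeval x f = aeval x g := by
  rw [← sub_eq_zero, ← map_sub]
  refine aeval_eq_zero_of_dvd_aeval_eq_zero (Finset.prod_dvd_of_coprime ?_ fun b hb ↦ ?_) hx
  · exact fun a _ b _ hab ↦ (pairwise_coprime_X_sub_C Function.injective_id hab).pow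
  · exact Ideal.mem_span_singleton.1 (Ideal.Quotient.eq.1 (h b hb))

theorem exists_orthogonalIdempotents_of_aeval_prod_X_sub_C_pow_eq_zero
    (hx : aeval x (∏ b ∈ s, (X - C b) ^ n) = 0) :
    ∃ E : K → A, OrthogonalIdempotents E ∧ ∑ a ∈ s, E a = 1 ∧ (∀ a ∉ s, E a = 0) ∧
      (∀ a, Commute x (E a)) ∧ ∀ a, aeval x ((X - C a) ^ n) * E a = 0 := by
  classical
  choose e he using exists_forall_mk_X_sub_C_pow_eq_ite s n
  refine ⟨fun a ↦ aeval x (e a), ⟨fun a ↦ ?_, fun a b hab ↦ ?_⟩, ?_, fun a ha ↦ ?_,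
    fun a ↦ ?_, fun a ↦ ?_⟩
  · rw [IsIdempotentElem, ← map_mul]
    refine aeval_eq_of_forall_mk_X_sub_C_pow_eq hx fun c hc ↦ ?_
    rw [map_mul, he a c hc]
    split_ifs <;> simp
  · dsimp only
    rw [← map_mul, ← map_zero (aeval (R := K) x)]
    refine aeval_eq_of_forall_mk_X_sub_C_pow_eq hx fun c hc ↦ ?_
    rw [map_mul, he a c hc, he b c hc, map_zero]
    split_ifs <;> simp_all
  · rw [← map_sum, ← map_one (aeval (R := K) x)]
    refine aeval_eq_of_forall_mk_X_sub_C_pow_eq hx fun c hc ↦ ?_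
    simp [Finset.sum_congr rfl fun a _ ↦ he a c hc, hc]
  · rw [← map_zero (aeval (R := K) x)]
    refine aeval_eq_of_forall_mk_X_sub_C_pow_eq hx fun c hc ↦ ?_
    rw [he a c hc, if_neg (ne_of_mem_of_not_mem hc ha).symm, map_zero]
  · simpa using (Commute.all X (e a)).map (aeval x)
  · rw [← map_mul, ← map_zero (aeval (R := K) x)]
    refine aeval_eq_of_forall_mk_X_sub_C_pow_eq hx fun c hc ↦ ?_
    rw [map_mul, he a c hc, map_zero]
    split_ifs with hac
    · rw [hac, Ideal.Quotient.eq_zero_iff_mem.2 (Ideal.mem_span_singleton_self _), zero_mul]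
    · rw [mul_zero]

end Polynomial

namespace CategoryTheory

section Linear

variable {R : Type*} [CommRing R] {C : Type*} [Category C] [Preadditive C]
  [CategoryTheory.Linear R C]

theorem comp_aeval_eq_aeval_comp {X Y : C} {f : X ⟶ Y} {x : End X} {y : End Y}
    (h : f ≫ y = x ≫ f) (p : R[X]) :
    f ≫ (aeval y p : Y ⟶ Y) = (aeval x p : X ⟶ X) ≫ f := by
  induction p using Polynomial.induction_on with
  | C a =>
    simp only [aeval_C, Algebra.algebraMap_eq_smul_one, End.one_def]
    rw [Linear.comp_smul, Linear.smul_comp, comp_id, id_comp]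
  | add p q hp hq =>
    rw [map_add, map_add, Preadditive.comp_add, Preadditive.add_comp, hp, hq]
  | monomial n a ih =>
    rw [pow_succ, ← mul_assoc, map_mul, map_mul (aeval x), aeval_X, aeval_X, End.mul_def,
      End.mul_def, ← assoc, h, assoc, ih, assoc]

variable {D : Type*} [Category D] [Preadditive D] [CategoryTheory.Linear R D]

def Functor.mapEndₐ (F : C ⥤ D) [F.Additive] [F.Linear R] (X : C) :
    End X →ₐ[R] End (F.obj X) :=
  { F.mapEnd (X := X) with
    map_zero' := F.map_zero X X
    map_add' := fun _ _ ↦ F.map_add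
    commutes' := fun r ↦ by
      simp only [Algebra.algebraMap_eq_smul_one, End.one_def]
      exact (F.map_smul r (𝟙 X)).trans (by rw [F.map_id]) }

theorem Functor.map_aeval (F : C ⥤ D) [F.Additive] [F.Linear R] {X : C} (x : End X)
    (p : R[X]) : F.map (aeval x p : X ⟶ X) = aeval (A := End (F.obj X)) (F.map x) p :=
  (aeval_algHom_apply (F.mapEndₐ X) x p).symm

end Linear

namespace Retract

variable {C : Type*} [Category C] {X X' Y Y' : C}

theorem conj_comp_i (hX : Retract X' X) (hY : Retract Y' Y) {f : X ⟶ Y}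
    (hf : f ≫ hY.r ≫ hY.i = (hX.r ≫ hX.i) ≫ f) : (hX.i ≫ f ≫ hY.r) ≫ hY.i = hX.i ≫ f := by
  rw [assoc, assoc, hf, assoc, retract_assoc]

theorem r_comp_conj (hX : Retract X' X) (hY : Retract Y' Y) {f : X ⟶ Y}
    (hf : f ≫ hY.r ≫ hY.i = (hX.r ≫ hX.i) ≫ f) : hX.r ≫ hX.i ≫ f ≫ hY.r = f ≫ hY.r := by
  rw [← assoc, ← assoc, ← hf, assoc, assoc, hY.retract, comp_id]

theorem i_comp_r_eq_zero [HasZeroMorphisms C] (h : Retract X' X) (h' : Retract Y' X)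
    (he : (h.r ≫ h.i) ≫ h'.r ≫ h'.i = 0) : h.i ≫ h'.r = 0 :=
  calc h.i ≫ h'.r = h.i ≫ ((h.r ≫ h.i) ≫ h'.r ≫ h'.i) ≫ h'.r := by simp
    _ = 0 := by rw [he, zero_comp, comp_zero]

theorem isZero_of_r_comp_i_eq_zero [HasZeroMorphisms C] (h : Retract X' X)
    (he : h.r ≫ h.i = 0) : IsZero X' := by
  rw [IsZero.iff_id_eq_zero]
  calc 𝟙 X' = h.i ≫ (h.r ≫ h.i) ≫ h.r := by simp
    _ = 0 := by rw [he, zero_comp, comp_zero]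

theorem aeval_conj_eq_zero {R : Type*} [CommRing R] [Preadditive C] [CategoryTheory.Linear R C]
    (h : Retract X' X) {x : End X} (hx : x ≫ h.r ≫ h.i = (h.r ≫ h.i) ≫ x) {p : R[X]}
    (hp : (h.r ≫ h.i) ≫ (aeval x p : X ⟶ X) = 0) :
    aeval (A := End X') (h.i ≫ x ≫ h.r) p = 0 :=
  calc aeval (A := End X') (h.i ≫ x ≫ h.r) p
      = (aeval (A := End X') (h.i ≫ x ≫ h.r) p : X' ⟶ X') ≫ h.i ≫ h.r := by
        rw [h.retract, comp_id]
    _ = h.i ≫ (aeval x p : X ⟶ X) ≫ h.r := by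
        rw [← assoc, ← comp_aeval_eq_aeval_comp (h.conj_comp_i h hx).symm, assoc]
    _ = h.i ≫ ((h.r ≫ h.i) ≫ (aeval x p : X ⟶ X)) ≫ h.r := by simp
    _ = 0 := by rw [hp, zero_comp, comp_zero]

end Retract

theorem exists_retracts_of_aeval_prod_X_sub_C_pow_eq_zero {K : Type*} [Field K] {D : Type*}
    [Category D] [Preadditive D] [CategoryTheory.Linear K D] [IsIdempotentComplete D] {Z : D}
    {x : End Z} {s : Finset K} {N : ℕ} (hx : aeval x (∏ b ∈ s, (X - C b) ^ N) = 0) :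
    ∃ (Y : K → D) (h : ∀ a, Retract (Y a) Z), (∀ a b, a ≠ b → (h a).i ≫ (h b).r = 0) ∧
      ∑ a ∈ s, (h a).r ≫ (h a).i = 𝟙 Z ∧ (∀ a ∉ s, IsZero (Y a)) ∧
      (∀ a, x ≫ (h a).r ≫ (h a).i = ((h a).r ≫ (h a).i) ≫ x) ∧
      ∀ a, aeval (A := End (Y a)) ((h a).i ≫ x ≫ (h a).r) ((X - C a) ^ N) = 0 := by
  obtain ⟨E, hE, hsum, hout, hcomm, hnil⟩ :=
    exists_orthogonalIdempotents_of_aeval_prod_X_sub_C_pow_eq_zero hx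
  choose Y i r hir hri using fun a ↦ IsIdempotentComplete.idempotents_split Z (E a) (hE.idem a)
  let h a : Retract (Y a) Z := ⟨i a, r a, hir a⟩
  have hx a : x ≫ (h a).r ≫ (h a).i = ((h a).r ≫ (h a).i) ≫ x := by
    simp only [h, hri]
    exact (hcomm a).eq.symm
  refine ⟨Y, h, fun a b hab ↦ (h a).i_comp_r_eq_zero (h b) ?_, ?_,
    fun a ha ↦ (h a).isZero_of_r_comp_i_eq_zero ((hri a).trans (hout a ha)), hx,
    fun a ↦ (h a).aeval_conj_eq_zero (hx a) ?_⟩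
  · simp only [h, hri]
    exact hE.ortho hab.symm
  · simp only [h, hri]
    exact hsum
  · simp only [h, hri]
    exact hnil a

namespace Pretriangulated

namespace Triangle

variable {C : Type*} [Category C] [HasShift C ℤ]

instance [IsIdempotentComplete C] : IsIdempotentComplete (Triangle C) where
  idempotents_split T e he := by
    have split (X : C) (p : X ⟶ X) (hp : p ≫ p = p) :
        ∃ (Y : C) (h : Retract Y X), h.r ≫ h.i = p := by
      obtain ⟨Y, i, r, hir, hri⟩ := IsIdempotentComplete.idempotents_split X p hp
      exact ⟨Y, ⟨i, r, hir⟩, hri⟩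
    obtain ⟨Y₁, h₁, e₁⟩ := split _ e.hom₁ (by rw [← comp_hom₁, he])
    obtain ⟨Y₂, h₂, e₂⟩ := split _ e.hom₂ (by rw [← comp_hom₂, he])
    obtain ⟨Y₃, h₃, e₃⟩ := split _ e.hom₃ (by rw [← comp_hom₃, he])
    let h₁' := h₁.map (CategoryTheory.shiftFunctor C (1 : ℤ))
    have c₁ : T.mor₁ ≫ h₂.r ≫ h₂.i = (h₁.r ≫ h₁.i) ≫ T.mor₁ := by rw [e₁, e₂, e.comm₁]
    have c₂ : T.mor₂ ≫ h₃.r ≫ h₃.i = (h₂.r ≫ h₂.i) ≫ T.mor₂ := by rw [e₂, e₃, e.comm₂]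
    have c₃ : T.mor₃ ≫ h₁'.r ≫ h₁'.i = (h₃.r ≫ h₃.i) ≫ T.mor₃ := by
      simp only [h₁', Retract.map, ← Functor.map_comp, e₁, e₃, e.comm₃]
    refine ⟨Triangle.mk (h₁.i ≫ T.mor₁ ≫ h₂.r) (h₂.i ≫ T.mor₂ ≫ h₃.r) (h₃.i ≫ T.mor₃ ≫ h₁'.r),
      Triangle.homMk _ _ h₁.i h₂.i h₃.i (h₁.conj_comp_i h₂ c₁) (h₂.conj_comp_i h₃ c₂)
        (h₃.conj_comp_i h₁' c₃),
      Triangle.homMk _ _ h₁.r h₂.r h₃.r (h₁.r_comp_conj h₂ c₁).symm (h₂.r_comp_conj h₃ c₂).symm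
        (h₃.r_comp_conj h₁' c₃).symm, ?_, ?_⟩
    · ext
      exacts [h₁.retract, h₂.retract, h₃.retract]
    · ext
      exacts [e₁, e₂, e₃]

variable [Preadditive C] [∀ n : ℤ, (CategoryTheory.shiftFunctor C n).Additive]

instance : (π₁ : Triangle C ⥤ C).Additive where
instance : (π₂ : Triangle C ⥤ C).Additive where
instance : (π₃ : Triangle C ⥤ C).Additive where

variable {R : Type*} [CommRing R] [CategoryTheory.Linear R C]
  [∀ n : ℤ, (CategoryTheory.shiftFunctor C n).Linear R]

instance : (π₁ : Triangle C ⥤ C).Linear R where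
instance : (π₂ : Triangle C ⥤ C).Linear R where
instance : (π₃ : Triangle C ⥤ C).Linear R where

variable {T : Triangle C} (φ : T ⟶ T) (p : R[X])

theorem aeval_hom₁ :
    TriangleMorphism.hom₁ (aeval (A := End T) φ p) = aeval (A := End T.obj₁) φ.hom₁ p :=
  π₁.map_aeval φ p

theorem aeval_hom₂ :
    TriangleMorphism.hom₂ (aeval (A := End T) φ p) = aeval (A := End T.obj₂) φ.hom₂ p :=
  π₂.map_aeval φ p

theorem aeval_hom₃ :
    TriangleMorphism.hom₃ (aeval (A := End T) φ p) = aeval (A := End T.obj₃) φ.hom₃ p :=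
  π₃.map_aeval φ p

end Triangle

variable {C : Type*} [Category C] [Preadditive C] [HasZeroObject C] [HasShift C ℤ]
  [∀ n : ℤ, (CategoryTheory.shiftFunctor C n).Additive] [Pretriangulated C] {T T' : Triangle C}

theorem comp_eq_zero_of_retract (h : Retract T' T) (hT : T ∈ distTriang C) {X Y : C}
    {f : X ⟶ T'.obj₃} {g : T'.obj₃ ⟶ Y} (hf : f ≫ T'.mor₃ = 0) (hg : T'.mor₂ ≫ g = 0) :
    f ≫ g = 0 := by
  obtain ⟨a, ha⟩ := Triangle.coyoneda_exact₃ T hT (f ≫ h.i.hom₃)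
    (by rw [assoc, ← h.i.comm₃, reassoc_of% hf, zero_comp])
  calc f ≫ g = (f ≫ h.i.hom₃) ≫ h.r.hom₃ ≫ g := by
        rw [assoc, ← comp_hom₃_assoc, h.retract, id_hom₃, id_comp]
    _ = 0 := by rw [ha, assoc, h.r.comm₂_assoc, hg, comp_zero, comp_zero]

theorem isIso_hom₃_of_retract (h : Retract T' T) (hT : T ∈ distTriang C) (θ : T' ⟶ T')
    (h₁ : θ.hom₁ = 𝟙 _) (h₂ : θ.hom₂ = 𝟙 _) : IsIso θ.hom₃ := by
  let f : End T'.obj₃ := θ.hom₃ - 𝟙 _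
  have hf : f * f = 0 := comp_eq_zero_of_retract h hT (f := f) (g := f)
    (by rw [Preadditive.sub_comp, ← θ.comm₃, h₁, Functor.map_id, comp_id, id_comp, sub_self])
    (by rw [Preadditive.comp_sub, θ.comm₂, h₂, id_comp, comp_id, sub_self])
  have := IsNilpotent.isUnit_one_add ⟨2, (pow_two f).trans hf⟩
  rw [show 1 + f = θ.hom₃ from add_sub_cancel _ _] at this
  exact (isUnit_iff_isIso _).1 this

/-- Complete `T'.mor₁` to a distinguished triangle `D` and compare: the maps `u : T' ⟶ D` and
`v : D ⟶ T'` are identities on the first two objects, so `v ≫ u` is an isomorphism because `D` is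
distinguished, and `u ≫ v` is one by `isIso_hom₃_of_retract`. -/
theorem distinguished_of_retract (h : Retract T' T) (hT : T ∈ distTriang C) :
    T' ∈ distTriang C := by
  obtain ⟨Z, g, k, hD⟩ := distinguished_cocone_triangle T'.mor₁
  obtain ⟨c, hc₂, hc₃⟩ :=
    complete_distinguished_triangle_morphism _ _ hT hD h.r.hom₁ h.r.hom₂ h.r.comm₁
  obtain ⟨d, hd₂, hd₃⟩ :=
    complete_distinguished_triangle_morphism _ _ hD hT h.i.hom₁ h.i.hom₂ h.i.comm₁
  let u : T' ⟶ Triangle.mk T'.mor₁ g k :=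
    h.i ≫ Triangle.homMk _ _ h.r.hom₁ h.r.hom₂ c h.r.comm₁ hc₂ hc₃
  let v : Triangle.mk T'.mor₁ g k ⟶ T' :=
    Triangle.homMk _ _ h.i.hom₁ h.i.hom₂ d h.i.comm₁ hd₂ hd₃ ≫ h.r
  have h₁ : h.i.hom₁ ≫ h.r.hom₁ = 𝟙 _ := congrArg TriangleMorphism.hom₁ h.retract
  have h₂ : h.i.hom₂ ≫ h.r.hom₂ = 𝟙 _ := congrArg TriangleMorphism.hom₂ h.retract
  have hu₁ : u.hom₁ = 𝟙 _ := h₁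
  have hu₂ : u.hom₂ = 𝟙 _ := h₂
  have hv₁ : v.hom₁ = 𝟙 _ := h₁
  have hv₂ : v.hom₂ = 𝟙 _ := h₂
  have hvu : IsIso (v.hom₃ ≫ u.hom₃) := by
    refine isIso₃_of_isIso₁₂ (v ≫ u) hD hD ?_ ?_
    · rw [comp_hom₁, hu₁, hv₁]; exact IsIso.comp_isIso' (IsIso.id _) (IsIso.id _)
    · rw [comp_hom₂, hu₂, hv₂]; exact IsIso.comp_isIso' (IsIso.id _) (IsIso.id _)
  have huv : IsIso (u.hom₃ ≫ v.hom₃) :=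
    isIso_hom₃_of_retract h hT (u ≫ v) (by rw [comp_hom₁, hu₁, hv₁]; exact id_comp _)
      (by rw [comp_hom₂, hu₂, hv₂]; exact id_comp _)
  have : IsSplitEpi u.hom₃ := ⟨⟨inv (v.hom₃ ≫ u.hom₃) ≫ v.hom₃, by simp⟩⟩
  have : Mono u.hom₃ := mono_of_mono _ v.hom₃
  have : IsIso u.hom₃ := isIso_of_mono_of_isSplitEpi _
  have : IsIso u := by
    refine Triangle.isIso_of_isIsos _ ?_ ?_ inferInstance
    · rw [hu₁]; exact IsIso.id _
    · rw [hu₂]; exact IsIso.id _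
  exact isomorphic_distinguished _ hD _ (asIso u)

variable {R : Type*} [CommRing R] [CategoryTheory.Linear R C]

theorem aeval_hom₂_mul_eq_zero (hT : T ∈ distTriang C) (φ : T ⟶ T) {P Q : R[X]}
    (hP : aeval (A := End T.obj₁) φ.hom₁ P = 0) (hQ : aeval (A := End T.obj₃) φ.hom₃ Q = 0) :
    aeval (A := End T.obj₂) φ.hom₂ (P * Q) = 0 := by
  obtain ⟨g, hg⟩ := Triangle.yoneda_exact₂ T hT (aeval (A := End T.obj₂) φ.hom₂ P)
    (by rw [comp_aeval_eq_aeval_comp φ.comm₁, hP, zero_comp])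
  rw [map_mul, End.mul_def, hg, ← assoc, ← comp_aeval_eq_aeval_comp φ.comm₂, hQ, comp_zero,
    zero_comp]

theorem aeval_mul_eq_zero [∀ n : ℤ, (CategoryTheory.shiftFunctor C n).Linear R]
    (hT : T ∈ distTriang C) (φ : T ⟶ T) {P Q : R[X]}
    (hP : aeval (A := End T.obj₁) φ.hom₁ P = 0) (hQ : aeval (A := End T.obj₃) φ.hom₃ Q = 0) :
    aeval (A := End T) φ (P * Q) = 0 := by
  refine Triangle.hom_ext _ _ ?_ ?_ ?_
  · rw [Triangle.aeval_hom₁, map_mul, hP, zero_mul]; rfl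
  · rw [Triangle.aeval_hom₂, aeval_hom₂_mul_eq_zero hT φ hP hQ]; rfl
  · rw [Triangle.aeval_hom₃, map_mul, hQ, mul_zero]; rfl

end Pretriangulated

end CategoryTheory

/-- In a `ℚ`-linear pseudo-abelian pretriangulated category, given a
distinguished triangle `T : A ⟶ B ⟶ C ⟶ A⟦1⟧` with an endomorphism `φ` of the triangle
such that `A` and `C` admit finite decompositions into generalized eigenspaces for
`φ.hom₁`, `φ.hom₃` (with rational eigenvalues), there is a finite set `s` of rational
numbers and a `φ`-equivariant direct sum decomposition of the triangle `T` into triangles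
`TT a` (the eigenvalue-`a` parts, zero for `a ∉ s`), compatible with the three maps of the
triangle, such that on `TT a` some positive power of `(φ - a • id)` vanishes and each
triangle `TT a` is distinguished. -/
theorem stmt4 {𝒯 : Type*} [Category 𝒯] [Preadditive 𝒯] [Linear ℚ 𝒯]
    [Limits.HasZeroObject 𝒯] [HasShift 𝒯 ℤ]
    [∀ n : ℤ, (shiftFunctor 𝒯 n).Additive] [Pretriangulated 𝒯]
    [IsIdempotentComplete 𝒯]
    (T : Triangle 𝒯) (hT : T ∈ distTriang 𝒯) (φ : T ⟶ T)
    (hA : ∃ (n : ℕ) (α : Fin n → ℚ), Function.Injective α ∧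
      ∃ m : Fin n → ℕ, (∀ i, 0 < m i) ∧
        Polynomial.aeval (A := End T.obj₁) φ.hom₁
          (∏ i, (Polynomial.X - Polynomial.C (α i)) ^ m i) = 0)
    (hC : ∃ (k : ℕ) (β : Fin k → ℚ), Function.Injective β ∧
      ∃ l : Fin k → ℕ, (∀ j, 0 < l j) ∧
        Polynomial.aeval (A := End T.obj₃) φ.hom₃
          (∏ j, (Polynomial.X - Polynomial.C (β j)) ^ l j) = 0) :
    ∃ (s : Finset ℚ) (TT : ℚ → Triangle 𝒯)
      (ι : ∀ a : ℚ, TT a ⟶ T) (p : ∀ a : ℚ, T ⟶ TT a) (ε : ∀ a : ℚ, TT a ⟶ TT a),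
      -- each eigenvalue triangle is distinguished
      (∀ a : ℚ, TT a ∈ distTriang 𝒯) ∧
      -- the eigenvalue triangles are direct summands of `T` …
      (∀ a : ℚ, ι a ≫ p a = 𝟙 (TT a)) ∧
      -- … pairwise orthogonal …
      (∀ a b : ℚ, a ≠ b →
        (ι a).hom₁ ≫ (p b).hom₁ = 0 ∧ (ι a).hom₂ ≫ (p b).hom₂ = 0 ∧
        (ι a).hom₃ ≫ (p b).hom₃ = 0) ∧
      -- … and they decompose `T` as a direct sum over the finitely many eigenvalues
      ((∑ a ∈ s, (p a).hom₁ ≫ (ι a).hom₁) = 𝟙 T.obj₁) ∧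
      ((∑ a ∈ s, (p a).hom₂ ≫ (ι a).hom₂) = 𝟙 T.obj₂) ∧
      ((∑ a ∈ s, (p a).hom₃ ≫ (ι a).hom₃) = 𝟙 T.obj₃) ∧
      -- the eigenvalue triangles for non-occurring eigenvalues are zero
      (∀ a : ℚ, a ∉ s →
        IsZero (TT a).obj₁ ∧ IsZero (TT a).obj₂ ∧ IsZero (TT a).obj₃) ∧
      -- the decomposition is `φ`-equivariant, `ε a` being the endomorphism induced by `φ`
      (∀ a : ℚ, ι a ≫ φ = ε a ≫ ι a) ∧
      (∀ a : ℚ, φ ≫ p a = p a ≫ ε a) ∧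
      -- on the summand for eigenvalue `a`, some positive power of `φ - a • id` vanishes
      (∀ a : ℚ, ∃ k : ℕ, 0 < k ∧
        Polynomial.aeval (A := End (TT a).obj₁) (ε a).hom₁
          ((Polynomial.X - Polynomial.C a) ^ k) = 0 ∧
        Polynomial.aeval (A := End (TT a).obj₂) (ε a).hom₂
          ((Polynomial.X - Polynomial.C a) ^ k) = 0 ∧
        Polynomial.aeval (A := End (TT a).obj₃) (ε a).hom₃
          ((Polynomial.X - Polynomial.C a) ^ k) = 0) := by
  obtain ⟨n, α, hα, m, -, hPA⟩ := hA
  obtain ⟨k, β, hβ, l, -, hPC⟩ := hC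
  obtain ⟨s, N, hN, hdvd⟩ := exists_mul_dvd_prod_X_sub_C_pow hα hβ m l
  obtain ⟨TT, h, horth, hsum, hzero, hcomm, hnil⟩ :=
    exists_retracts_of_aeval_prod_X_sub_C_pow_eq_zero
      (aeval_eq_zero_of_dvd_aeval_eq_zero hdvd (aeval_mul_eq_zero hT φ hPA hPC))
  refine ⟨s, TT, fun a ↦ (h a).i, fun a ↦ (h a).r, fun a ↦ (h a).i ≫ φ ≫ (h a).r,
    fun a ↦ distinguished_of_retract (h a) hT, fun a ↦ (h a).retract, fun a b hab ↦ ?_,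
    (Triangle.π₁.map_sum _ s).symm.trans (congrArg Triangle.π₁.map hsum),
    (Triangle.π₂.map_sum _ s).symm.trans (congrArg Triangle.π₂.map hsum),
    (Triangle.π₃.map_sum _ s).symm.trans (congrArg Triangle.π₃.map hsum),
    fun a ha ↦ ?_, fun a ↦ ((h a).conj_comp_i (h a) (hcomm a)).symm,
    fun a ↦ ((h a).r_comp_conj (h a) (hcomm a)).symm, fun a ↦ ⟨N, hN, ?_⟩⟩
  · have h0 := horth a b hab
    exact ⟨congrArg TriangleMorphism.hom₁ h0, congrArg TriangleMorphism.hom₂ h0,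
      congrArg TriangleMorphism.hom₃ h0⟩
  · exact ⟨Triangle.π₁.map_isZero (hzero a ha), Triangle.π₂.map_isZero (hzero a ha),
      Triangle.π₃.map_isZero (hzero a ha)⟩
  · exact ⟨by rw [← Triangle.aeval_hom₁, hnil a]; rfl, by rw [← Triangle.aeval_hom₂, hnil a]; rfl,
      by rw [← Triangle.aeval_hom₃, hnil a]; rfl⟩
end
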